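/- Let r ≥ 2 and let y be the positive unit Perron eigenvector of T_{n,r} with y₁ the entry on a part of size ⌊n/r⌋. Then 1/n ≤ y₁² < 1/(n−2). -/

import Mathlib

/-!
On a complete multipartite graph the eigenvalue equation reads `ρ y v = ∑ y - ∑_{part of v} y`.
Since the right side depends only on the part of `v`, a positive eigenvector (for which `ρ > 0`)
is constant on parts and satisfies `(ρ + |P|) y v = ∑ y` on each part `P`. With
`β = ρ + ⌊n/r⌋` and all part sizes in `{⌊n/r⌋, ⌊n/r⌋ + 1}` this gives
`β y₁ ≤ (β + 1) y v` and `y v ≤ y₁` for every vertex. The second inequality yields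
`1 = ∑ y v² ≤ n y₁²`. Summing the first gives `n - 1 ≤ β`, and squaring and summing it gives
`n β² y₁² ≤ (β + 1)²`, which is less than `n β² / (n - 2)` once `β ≥ n - 1`.
-/

open SimpleGraph Finset Matrix

namespace SimpleGraph

variable {V : Type*} [Fintype V] {G : SimpleGraph V} [DecidableRel G.Adj]

lemma pos_of_adjMatrix_mulVec_eq_smul {y : V → ℝ} {ρ : ℝ} (hy : ∀ v, 0 < y v)
    (hρ : G.adjMatrix ℝ *ᵥ y = ρ • y) {v w : V} (hvw : G.Adj v w) : 0 < ρ := by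
  have hv : ρ * y v = ∑ u ∈ G.neighborFinset v, y u := by
    rw [← adjMatrix_mulVec_apply, hρ, Pi.smul_apply, smul_eq_mul]
  have hsum : 0 < ∑ u ∈ G.neighborFinset v, y u :=
    sum_pos (fun u _ => hy u) ⟨w, (G.mem_neighborFinset v w).2 hvw⟩
  exact pos_of_mul_pos_left (hv ▸ hsum) (hy v).le

variable {α : Type*} [DecidableEq α] {f : V → α}

lemma adjMatrix_mulVec_apply_of_adj_iff {R : Type*} [NonAssocRing R]
    (hG : ∀ v w, G.Adj v w ↔ f v ≠ f w) (y : V → R) (v : V) :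
    (G.adjMatrix R *ᵥ y) v = ∑ w, y w - ∑ w with f w = f v, y w := by
  have hN : G.neighborFinset v = ({w | ¬ f w = f v} : Finset V) := by
    ext w
    simp [hG, eq_comm]
  rw [adjMatrix_mulVec_apply, hN, eq_sub_iff_add_eq, add_comm, sum_filter_add_sum_filter_not]

lemma add_card_fiber_mul_eq_sum_of_adj_iff {𝕜 : Type*} [Field 𝕜]
    (hG : ∀ v w, G.Adj v w ↔ f v ≠ f w) {y : V → 𝕜} {ρ : 𝕜} (hρ0 : ρ ≠ 0)
    (hρ : G.adjMatrix 𝕜 *ᵥ y = ρ • y) (v : V) :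
    (ρ + #{w | f w = f v}) * y v = ∑ w, y w := by
  have heig (u : V) : ρ * y u = ∑ w, y w - ∑ w with f w = f u, y w := by
    rw [← adjMatrix_mulVec_apply_of_adj_iff hG, hρ, Pi.smul_apply, smul_eq_mul]
  have hconst : ∀ w ∈ ({w | f w = f v} : Finset V), y w = y v := by
    intro w hw
    rw [mem_filter] at hw
    apply mul_left_cancel₀ hρ0
    rw [heig, heig, hw.2]
  rw [add_mul, heig, sum_congr rfl hconst, sum_const, nsmul_eq_mul]
  ring

end SimpleGraph

lemma card_filter_fin_eq_count (n : ℕ) (p : ℕ → Prop) [DecidablePred p] :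
    #{v : Fin n | p v} = Nat.count p n := by
  rw [Nat.count_eq_card_filter_range, ← Nat.Iio_eq_range, ← Fin.map_valEmbedding_univ,
    filter_map, card_map]
  rfl

lemma card_filter_fin_mod_eq {r : ℕ} (hr : 0 < r) (n c : ℕ) :
    #{v : Fin n | v.val % r = c % r} = n / r + if c % r < n % r then 1 else 0 := by
  rw [card_filter_fin_eq_count (p := fun m => m % r = c % r), ← Nat.count_modEq_card n hr c]
  rfl

lemma card_filter_fin_mod_eq_mem_Icc {r : ℕ} (hr : 0 < r) (n c : ℕ) :
    #{v : Fin n | v.val % r = c % r} ∈ Icc (n / r) (n / r + 1) := by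
  rw [card_filter_fin_mod_eq hr, mem_Icc]
  split_ifs <;> omega

section

variable {V : Type*} [Fintype V] {y : V → ℝ}

lemma card_le_of_forall_le_mul {a c : ℝ} (hc : 0 < c) (hsum : ∑ v, y v = c)
    (h : ∀ v, c ≤ a * y v) : (Fintype.card V : ℝ) ≤ a := by
  have hle : Fintype.card V * c ≤ a * c := by
    simpa [← mul_sum, hsum] using sum_le_sum fun v (_ : v ∈ univ) => h v
  exact le_of_mul_le_mul_right hle hc

lemma one_le_card_mul_sq_of_forall_le {x : ℝ} (hy : ∀ v, 0 ≤ y v) (hsum : ∑ v, y v ^ 2 = 1)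
    (h : ∀ v, y v ≤ x) : 1 ≤ Fintype.card V * x ^ 2 := by
  simpa [hsum] using sum_le_sum fun v (_ : v ∈ univ) => pow_le_pow_left₀ (hy v) (h v) 2

lemma card_mul_sq_le_of_forall_le_mul {a c : ℝ} (hsum : ∑ v, y v ^ 2 = 1) (hc : 0 ≤ c)
    (h : ∀ v, c ≤ a * y v) : Fintype.card V * c ^ 2 ≤ a ^ 2 := by
  have hle := sum_le_sum fun v (_ : v ∈ univ) => pow_le_pow_left₀ hc (h v) 2
  simpa [mul_pow, ← mul_sum, hsum] using hle

lemma sq_lt_one_div_sub_two {n β x : ℝ} (hn : 2 < n) (hβ : n ≤ β + 1)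
    (h : n * (β * x) ^ 2 ≤ (β + 1) ^ 2) : x ^ 2 < 1 / (n - 2) := by
  have hβ0 : 0 < β := by linarith
  rw [lt_div_iff₀ (by linarith)]
  -- `n β² - (n - 2)(β + 1)² = 2β(β - (n - 2)) - (n - 2) ≥ 2(n - 1) - (n - 2) > 0`
  have hgap : (n - 2) * (β + 1) ^ 2 < n * β ^ 2 := by nlinarith
  have hβ2 : 0 < n * β ^ 2 := by positivity
  nlinarith

theorem sq_mem_Ico_of_add_mul_eq_sum {K : V → ℕ} {q : ℕ} {ρ : ℝ} {v₁ : V}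
    (hy : ∀ v, 0 < y v) (hsum : ∑ v, y v ^ 2 = 1) (hfib : ∀ v, (ρ + K v) * y v = ∑ w, y w)
    (hK : ∀ v, K v ∈ Icc q (q + 1)) (hK₁ : K v₁ = q) (hn : 2 < Fintype.card V) :
    y v₁ ^ 2 ∈ Set.Ico (1 / (Fintype.card V : ℝ)) (1 / (Fintype.card V - 2)) := by
  have hKv (v : V) : (q : ℝ) ≤ K v ∧ (K v : ℝ) ≤ q + 1 := by
    exact_mod_cast mem_Icc.1 (hK v)
  have hS : (ρ + q) * y v₁ = ∑ w, y w := hK₁ ▸ hfib v₁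
  set β : ℝ := ρ + q
  have hβy : 0 < β * y v₁ := hS ▸ sum_pos (fun v _ => hy v) ⟨v₁, mem_univ _⟩
  have hβ : 0 < β := pos_of_mul_pos_left hβy (hy v₁).le
  have hle (v : V) : y v ≤ y v₁ := by
    refine le_of_mul_le_mul_left ?_ hβ
    calc β * y v ≤ (ρ + K v) * y v :=
          mul_le_mul_of_nonneg_right (by linarith [(hKv v).1]) (hy v).le
      _ = β * y v₁ := (hfib v).trans hS.symm
  have hge (v : V) : β * y v₁ ≤ (β + 1) * y v := by
    calc β * y v₁ = (ρ + K v) * y v := hS.trans (hfib v).symm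
      _ ≤ (β + 1) * y v := mul_le_mul_of_nonneg_right (by linarith [(hKv v).2]) (hy v).le
  have hcard : (0 : ℝ) < Fintype.card V := by positivity
  refine ⟨?_, sq_lt_one_div_sub_two (by exact_mod_cast hn)
    (card_le_of_forall_le_mul hβy hS.symm hge)
    (card_mul_sq_le_of_forall_le_mul hsum hβy.le hge)⟩
  rw [div_le_iff₀ hcard, mul_comm]
  exact one_le_card_mul_sq_of_forall_le (fun v => (hy v).le) hsum hle

end

/-- If `y` is the positive unit Perron eigenvector of the Turán graph `T_{n,r}` and `y₁`
is its common value on a part of size `⌊n/r⌋`, then `1/n ≤ y₁² < 1/(n-2)`. -/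
theorem turan_perron_entry_sq (r : ℕ) (hr : 2 ≤ r) :
    ∃ N : ℕ, ∀ n ≥ N, ∀ (ρ : ℝ) (y : Fin n → ℝ),
      (∀ v, 0 < y v) → (∑ v : Fin n, y v ^ 2 = 1) →
      ((turanGraph n r).adjMatrix ℝ).mulVec y = ρ • y →
      ∀ c₁ : ℕ, c₁ < r →
      (univ.filter (fun v : Fin n => v.val % r = c₁)).card = n / r →
      ∀ y₁ : ℝ, (∀ v : Fin n, v.val % r = c₁ → y v = y₁) →
      1 / (n : ℝ) ≤ y₁ ^ 2 ∧ y₁ ^ 2 < 1 / ((n : ℝ) - 2) := by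
  refine ⟨r + 1, fun n hn ρ y hy hsum heig c₁ hc₁ hcard y₁ hy₁ => ?_⟩
  have hρ : 0 < ρ := pos_of_adjMatrix_mulVec_eq_smul hy heig (v := ⟨0, by omega⟩)
    (w := ⟨1, by omega⟩) (by simp [turanGraph_adj, Nat.mod_eq_of_lt (by omega : 1 < r)])
  have hfib := add_card_fiber_mul_eq_sum_of_adj_iff (f := fun v : Fin n => v.val % r)
    (fun _ _ => Iff.rfl) hρ.ne' heig
  obtain ⟨v₁, hv₁⟩ : ∃ v₁ : Fin n, v₁.val % r = c₁ := ⟨⟨c₁, by omega⟩, Nat.mod_eq_of_lt hc₁⟩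
  have := sq_mem_Ico_of_add_mul_eq_sum (v₁ := v₁) hy hsum hfib
    (fun v => card_filter_fin_mod_eq_mem_Icc (by omega) n v) (by rw [hv₁, hcard])
    (by rw [Fintype.card_fin]; omega)
  rwa [hy₁ v₁ hv₁, Fintype.card_fin, Set.mem_Ico] at this
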